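/- Let n ≥ 1, α ∈ (0,∞)ⁿ, and v ∈ ℝⁿ. If vᵢ < 1 for every i, then sup{⟨v,β⟩ − KL(α|β) : β ∈ [0,∞)ⁿ} = −Σᵢ αᵢ·log(1 − vᵢ), and the supremum is attained at the vector β with βᵢ = αᵢ/(1 − vᵢ). If vᵢ ≥ 1 for some i, the supremum is +∞. -/

import Mathlib

open scoped ENNReal NNReal Classical BigOperators

/-- The generalized Kullback–Leibler term `a·log(a/b) − a + b` for `a, b ≥ 0`, with the
conventions `0·log(0/b) = 0` for `b ≥ 0` and `a·log(a/0) = +∞` for `a > 0`. -/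
noncomputable def klTerm (a b : ℝ≥0) : EReal :=
  if a = 0 then ((b : ℝ) : EReal)
  else if b = 0 then ⊤
  else (((a : ℝ) * Real.log ((a : ℝ) / (b : ℝ)) - (a : ℝ) + (b : ℝ) : ℝ) : EReal)

/-!
The objective is separable: `⟨v,β⟩ − KL(α|β) = ∑ᵢ (vᵢ βᵢ − KL(αᵢ|βᵢ))`, the subtraction in `EReal`
being harmless because KL terms are never `−∞`. For `v < 1` each summand is bounded by
`−a log(1 − v)` through the tangent-line bound `log x ≤ x − 1` at `x = b(1 − v)/a`, with equality
at `b = a/(1 − v)`. For `v ≥ 1` the summand is at least `a log(b/a)`, hence unbounded, while the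
other coordinates can be frozen at `β = α`, where their KL terms vanish.
-/

open Finset Real

namespace EReal

theorem coe_finsetSum {ι : Type*} (s : Finset ι) (x : ι → ℝ) :
    ((∑ i ∈ s, x i : ℝ) : EReal) = ∑ i ∈ s, (x i : EReal) :=
  map_sum (⟨⟨Real.toEReal, coe_zero⟩, coe_add⟩ : ℝ →+ EReal) x s

theorem coe_sum_sub_sum {ι : Type*} (s : Finset ι) (x : ι → ℝ) (y : ι → EReal)
    (hy : ∀ i ∈ s, y i ≠ ⊥) :
    ((∑ i ∈ s, x i : ℝ) : EReal) - ∑ i ∈ s, y i = ∑ i ∈ s, ((x i : EReal) - y i) := by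
  induction s using Finset.cons_induction with
  | empty => simp
  | cons a s ha ih =>
    have hya : y a ≠ ⊥ := hy a (mem_cons_self a s)
    have hys : ∑ i ∈ s, y i ≠ ⊥ :=
      sum_induction y (· ≠ ⊥) (fun _ _ hp hq => add_ne_bot_iff.mpr ⟨hp, hq⟩) zero_ne_bot
        fun i hi => hy i (mem_cons_of_mem hi)
    rw [sum_cons, sum_cons, sum_cons, ← ih fun i hi => hy i (mem_cons_of_mem hi), coe_add,
      sub_eq_add_neg, neg_add (Or.inl hya) (Or.inr hys)]
    simp only [sub_eq_add_neg]
    exact add_add_add_comm _ _ _ _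

theorem iSup_sum_eq_top {ι X : Type*} [Fintype ι] (f : ι → X → EReal) (x₀ : ι → X) (c : ι → ℝ)
    (hc : ∀ j, (c j : EReal) ≤ f j (x₀ j)) (i : ι) (hi : ∀ r : ℝ, ∃ x, (r : EReal) ≤ f i x) :
    ⨆ x : ι → X, ∑ j, f j (x j) = ⊤ := by
  rw [eq_top_iff_forall_lt]
  intro y
  set r := y + 1 - ∑ j ∈ univ \ {i}, c j
  obtain ⟨xi, hxi⟩ := hi r
  have hsum : ∑ j, Function.update c i r j = y + 1 := by
    rw [sum_update_of_mem (mem_univ i)]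
    ring
  calc (y : EReal) < ((y + 1 : ℝ) : EReal) := by exact_mod_cast lt_add_one y
    _ = ∑ j, (Function.update c i r j : EReal) := by
      rw [← coe_finsetSum, hsum]
    _ ≤ ∑ j, f j (Function.update x₀ i xi j) := by
      refine sum_le_sum fun j _ => ?_
      rcases eq_or_ne j i with rfl | hji
      · simpa using hxi
      · simpa [Function.update_of_ne hji] using hc j
    _ ≤ ⨆ x : ι → X, ∑ j, f j (x j) := le_iSup_of_le (Function.update x₀ i xi) le_rfl

end EReal

theorem mul_sub_kl_le_neg_mul_log_one_sub {a b v : ℝ} (ha : 0 < a) (hb : 0 < b) (hv : v < 1) :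
    v * b - (a * log (a / b) - a + b) ≤ -(a * log (1 - v)) := by
  have h1v : 0 < 1 - v := by linarith
  have h := log_le_sub_one_of_pos (show 0 < b * (1 - v) / a by positivity)
  rw [log_div (by positivity) ha.ne', log_mul hb.ne' h1v.ne'] at h
  have h' := mul_le_mul_of_nonneg_left h ha.le
  have hrhs : a * (b * (1 - v) / a - 1) = b * (1 - v) - a := by field_simp
  rw [log_div ha.ne' hb.ne']
  linarith

theorem mul_sub_kl_div_one_sub {a v : ℝ} (ha : 0 < a) (hv : v < 1) :
    v * (a / (1 - v)) - (a * log (a / (a / (1 - v))) - a + a / (1 - v)) = -(a * log (1 - v)) := by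
  have h1v : 0 < 1 - v := by linarith
  rw [div_div_cancel₀ ha.ne']
  field_simp
  ring

theorem mul_log_div_le_mul_sub_kl {a t v : ℝ} (ha : 0 < a) (ht : 0 < t) (hv : 1 ≤ v) :
    a * log (t / a) ≤ v * t - (a * log (a / t) - a + t) := by
  rw [← inv_div, log_inv]
  nlinarith

section klTerm

variable {a b : ℝ≥0}

theorem klTerm_of_ne_zero (ha : a ≠ 0) (hb : b ≠ 0) :
    klTerm a b = ((a * log (a / b) - a + b : ℝ) : EReal) := by
  rw [klTerm, if_neg ha, if_neg hb]

theorem klTerm_zero_right (ha : a ≠ 0) : klTerm a 0 = ⊤ := by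
  rw [klTerm, if_neg ha, if_pos rfl]

theorem klTerm_self (a : ℝ≥0) : klTerm a a = 0 := by
  by_cases ha : a = 0
  · simp [klTerm, ha]
  · rw [klTerm_of_ne_zero ha ha, div_self (NNReal.coe_ne_zero.mpr ha), log_one]
    simp

theorem klTerm_ne_bot (a b : ℝ≥0) : klTerm a b ≠ ⊥ := by
  unfold klTerm
  split_ifs
  · exact EReal.coe_ne_bot _
  · exact top_ne_bot
  · exact EReal.coe_ne_bot _

variable {v : ℝ}

theorem coe_mul_sub_klTerm_le (ha : a ≠ 0) (hv : v < 1) (b : ℝ≥0) :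
    ((v * b : ℝ) : EReal) - klTerm a b ≤ ((-(a * log (1 - v)) : ℝ) : EReal) := by
  rcases eq_or_ne b 0 with rfl | hb
  · simp [klTerm_zero_right ha]
  · rw [klTerm_of_ne_zero ha hb, ← EReal.coe_sub, EReal.coe_le_coe_iff]
    exact mul_sub_kl_le_neg_mul_log_one_sub (by positivity) (by positivity) hv

theorem coe_mul_sub_klTerm_div_one_sub (ha : a ≠ 0) (hv : v < 1) :
    ((v * (a / (1 - v).toNNReal : ℝ≥0) : ℝ) : EReal) - klTerm a (a / (1 - v).toNNReal)
      = ((-(a * log (1 - v)) : ℝ) : EReal) := by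
  have h1v : 0 < 1 - v := by linarith
  have hb : a / (1 - v).toNNReal ≠ 0 := div_ne_zero ha (by simpa using h1v)
  rw [klTerm_of_ne_zero ha hb, ← EReal.coe_sub, EReal.coe_eq_coe_iff, NNReal.coe_div,
    Real.coe_toNNReal _ h1v.le]
  exact mul_sub_kl_div_one_sub (by positivity) hv

theorem exists_coe_le_coe_mul_sub_klTerm (ha : a ≠ 0) (hv : 1 ≤ v) (r : ℝ) :
    ∃ b : ℝ≥0, (r : EReal) ≤ ((v * b : ℝ) : EReal) - klTerm a b := by
  have ha' : (0 : ℝ) < a := by positivity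
  set t : ℝ := a * exp (r / a)
  have ht : 0 < t := by positivity
  refine ⟨t.toNNReal, ?_⟩
  have htne : t.toNNReal ≠ 0 := by simpa using ht
  rw [klTerm_of_ne_zero ha htne, ← EReal.coe_sub, EReal.coe_le_coe_iff,
    Real.coe_toNNReal _ ht.le]
  have hlog : a * log (t / a) = r := by
    rw [mul_div_cancel_left₀ _ ha'.ne', log_exp, mul_div_cancel₀ _ ha'.ne']
  exact hlog ▸ mul_log_div_le_mul_sub_kl ha' ht hv

end klTerm

theorem klDiv_conjugate_second (n : ℕ) (α : Fin n → ℝ≥0) (hα : ∀ i, 0 < α i)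
    (v : Fin n → ℝ) :
    ((∀ i, v i < 1) →
      ((⨆ β : Fin n → ℝ≥0,
          (((∑ i, v i * (β i : ℝ) : ℝ) : EReal) - ∑ i, klTerm (α i) (β i)))
        = ((-∑ i, (α i : ℝ) * Real.log (1 - v i) : ℝ) : EReal))
      ∧ ((((∑ i, v i * ((α i / (1 - v i).toNNReal : ℝ≥0) : ℝ) : ℝ) : EReal)
            - ∑ i, klTerm (α i) (α i / (1 - v i).toNNReal))
          = ((-∑ i, (α i : ℝ) * Real.log (1 - v i) : ℝ) : EReal)))
    ∧ ((∃ i, 1 ≤ v i) →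
        (⨆ β : Fin n → ℝ≥0,
          (((∑ i, v i * (β i : ℝ) : ℝ) : EReal) - ∑ i, klTerm (α i) (β i))) = ⊤) := by
  have hsplit (β : Fin n → ℝ≥0) :
      ((∑ i, v i * (β i : ℝ) : ℝ) : EReal) - ∑ i, klTerm (α i) (β i)
        = ∑ i, (((v i * β i : ℝ) : EReal) - klTerm (α i) (β i)) :=
    EReal.coe_sum_sub_sum _ _ _ fun i _ => klTerm_ne_bot _ _
  simp only [hsplit]
  simp only [← sum_neg_distrib, EReal.coe_finsetSum]
  refine ⟨fun hv => ?_, fun ⟨i, hi⟩ => ?_⟩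
  · have hopt := sum_congr rfl fun i (_ : i ∈ univ) =>
      coe_mul_sub_klTerm_div_one_sub (hα i).ne' (hv i)
    refine ⟨le_antisymm (iSup_le fun β => ?_) (hopt ▸ le_iSup_of_le _ le_rfl), hopt⟩
    exact sum_le_sum fun i _ => coe_mul_sub_klTerm_le (hα i).ne' (hv i) (β i)
  · refine EReal.iSup_sum_eq_top (fun j (b : ℝ≥0) => ((v j * b : ℝ) : EReal) - klTerm (α j) b)
      α (fun j => v j * α j) (fun j => ?_) i (exists_coe_le_coe_mul_sub_klTerm (hα i).ne' hi)
    rw [klTerm_self, sub_zero]
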